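/- arXiv:1508.02366 — 7 statements merged into one kernel-verified Lean document; each statement's English description precedes it below -/
import Mathlib

section
/- Let X be an uncountable separable metric space, k ≥ 1, c ≥ 1, and let χ : [X]^k → {1,...,c} be a coloring of the k-element subsets of X. Then there exists an infinite subset Λ ⊆ X monochromatic for χ (all k-element subsets of Λ receive the same color) and a point r ∈ Λ such that for every ε > 0 there exists r' ∈ Λ with r' ≠ r and d(r', r) < ε. -/
/-!
If `x n → r` and `x` is end-homogeneous over `r`, i.e. `χ (insert (x n) s) = χ (insert r s)` for
`s ⊆ {x 0, …, x (n-1)}`, then replacing the point of largest index of a `k`-set of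
`{r} ∪ range x` by `r` keeps its colour. So the colouring of `k`-sets there is induced by the
colouring `t ↦ χ (insert r t)` of `(k-1)`-sets of indices, and infinite Ramsey for the latter
gives the monochromatic set.

Such a sequence exists: close under the map sending a finite `F` to a countable set that is dense
in every class of points inducing the same colours over `F`. The closure `M` is countable, so
some `r ∉ M`, and each `x n` can be chosen in `M`, near `r`, in the class of `r` over the points
chosen before.
-/

open Set Filter Topology Function

section Monochromatic

variable {α β : Type*}

def IsMonochromatic (χ : Finset α → β) (k : ℕ) (Λ : Set α) (i : β) : Prop :=
  ∀ s : Finset α, ↑s ⊆ Λ → s.card = k → χ s = i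

theorem IsMonochromatic.mono {χ : Finset α → β} {k : ℕ} {Λ Λ' : Set α} {i : β}
    (h : IsMonochromatic χ k Λ i) (hΛ : Λ' ⊆ Λ) : IsMonochromatic χ k Λ' i :=
  fun s hs => h s (hs.trans hΛ)

end Monochromatic

section Ramsey

variable {β : Type*}

theorem isMonochromatic_image_of_forall_insert (f : Finset ℕ → β) {m : ℕ} {A : ℕ → ℕ}
    (hA : StrictMono A) {col : ℕ → β}
    (hcol : ∀ n, IsMonochromatic (fun J => f (insert (A n) J)) m (A '' Ioi n) (col n))
    {N : Set ℕ} {i : β} (hN : ∀ n ∈ N, col n = i) :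
    IsMonochromatic f (m + 1) (A '' N) i := by
  intro J hJ hcard
  have hne : J.Nonempty := Finset.card_pos.mp (by omega)
  obtain ⟨n, hnN, hn⟩ := hJ (J.min'_mem hne)
  have hmem : A n ∈ J := hn ▸ J.min'_mem hne
  have hrest : ↑(J.erase (A n)) ⊆ A '' Ioi n := by
    intro z hz
    obtain ⟨j, -, rfl⟩ := hJ (Finset.mem_of_mem_erase hz)
    refine ⟨j, hA.lt_iff_lt.mp ?_, rfl⟩
    exact hn ▸ J.min'_lt_of_mem_erase_min' hne (hn ▸ hz)
  rw [← Finset.insert_erase hmem, ← hN n hnN]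
  exact hcol n _ hrest (by rw [Finset.card_erase_of_mem hmem, hcard]; rfl)

theorem exists_infinite_isMonochromatic [Finite β] (f : Finset ℕ → β) (m : ℕ) {T : Set ℕ}
    (hT : T.Infinite) : ∃ S ⊆ T, S.Infinite ∧ ∃ i, IsMonochromatic f m S i := by
  induction m generalizing f T with
  | zero => exact ⟨T, subset_rfl, hT, f ∅, fun s _ hs => by rw [Finset.card_eq_zero.mp hs]⟩
  | succ m ih =>
    have step (T : {T : Set ℕ // T.Infinite}) :
        ∃ a ∈ T.1, ∃ T' : {T' : Set ℕ // T'.Infinite},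
          T'.1 ⊆ T.1 \ Iic a ∧ ∃ i, IsMonochromatic (fun J => f (insert a J)) m T'.1 i := by
      obtain ⟨a, ha⟩ := T.2.nonempty
      obtain ⟨T', hT', hT'inf, i, hi⟩ := ih (fun J => f (insert a J)) (T.2.sdiff (finite_Iic a))
      exact ⟨a, ha, ⟨T', hT'inf⟩, hT', i, hi⟩
    choose a ha next hnext col hcol using step
    set Tn : ℕ → {T : Set ℕ // T.Infinite} := fun n => next^[n] ⟨T, hT⟩
    have hTn_succ (n : ℕ) : Tn (n + 1) = next (Tn n) := iterate_succ_apply' next n _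
    have hanti : Antitone fun n => (Tn n).1 := antitone_nat_of_succ_le fun n =>
      hTn_succ n ▸ (hnext (Tn n)).trans sdiff_subset
    set A : ℕ → ℕ := fun n => a (Tn n)
    have hA : StrictMono A := strictMono_nat_of_lt_succ fun n =>
      not_le.mp (hnext (Tn n) (hTn_succ n ▸ ha (Tn (n + 1)))).2
    have hAlater (n : ℕ) : A '' Ioi n ⊆ (next (Tn n)).1 := by
      rintro _ ⟨j, hj, rfl⟩
      exact hTn_succ n ▸ hanti (Nat.succ_le_of_lt hj) (ha (Tn j))
    obtain ⟨i, hi⟩ := Finite.exists_infinite_fiber fun n => col (Tn n)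
    refine ⟨A '' (fun n => col (Tn n)) ⁻¹' {i}, ?_,
      (infinite_coe_iff.mp hi).image hA.injective.injOn, i,
      isMonochromatic_image_of_forall_insert f hA (fun n => (hcol (Tn n)).mono (hAlater n))
        fun n hn => hn⟩
    rintro _ ⟨n, -, rfl⟩
    exact hanti n.zero_le (ha (Tn n))

end Ramsey

theorem exists_infinite_isMonochromatic_insert_image {α β : Type*} [DecidableEq α] [Finite β]
    (χ : Finset α → β) {k : ℕ} (hk : 1 ≤ k) {r : α} {x : ℕ → α} (hx : Injective x)
    (hend : ∀ n, ∀ s ⊆ (Finset.range n).image x, χ (insert (x n) s) = χ (insert r s)) :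
    ∃ S : Set ℕ, S.Infinite ∧ ∃ i, IsMonochromatic χ k (insert r (x '' S)) i := by
  obtain ⟨S, -, hS, i, hi⟩ :=
    exists_infinite_isMonochromatic (fun K => χ (insert r (K.image x))) (k - 1) infinite_univ
  refine ⟨S, hS, i, fun e he he_card => ?_⟩
  by_cases hr : r ∈ e
  · obtain ⟨K, hKS, hK⟩ := Finset.subset_set_image_iff.mp fun z hz =>
      (he (Finset.mem_of_mem_erase hz)).resolve_left (Finset.ne_of_mem_erase hz)
    rw [← Finset.insert_erase hr, ← hK]
    refine hi K hKS ?_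
    rw [← Finset.card_image_of_injective K hx, hK, Finset.card_erase_of_mem hr, he_card]
  · obtain ⟨K, hKS, rfl⟩ := Finset.subset_set_image_iff.mp fun z hz =>
      (he hz).resolve_left fun h => hr (h ▸ hz)
    rw [Finset.card_image_of_injective K hx] at he_card
    have hne : K.Nonempty := Finset.card_pos.mp (by omega)
    have hmax : K.max' hne ∈ K := K.max'_mem hne
    have hbelow : K.erase (K.max' hne) ⊆ Finset.range (K.max' hne) := fun j hj =>
      Finset.mem_range.mpr (K.lt_max'_of_mem_erase_max' hne hj)
    rw [← Finset.insert_erase hmax, Finset.image_insert,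
      hend _ _ (Finset.image_subset_image hbelow)]
    exact hi _ (fun j hj => hKS (Finset.mem_of_mem_erase hj))
      (by rw [Finset.card_erase_of_mem hmax, he_card])

theorem exists_seq_of_forall_finset_exists_insert {α : Type*} [DecidableEq α]
    {I : Finset α → Prop} {P : ℕ → Finset α → α → Prop} (h0 : I ∅)
    (h : ∀ n F, I F → ∃ y, P n F y ∧ I (insert y F)) :
    ∃ x : ℕ → α, ∀ n, P n ((Finset.range n).image x) (x n) := by
  choose y hy hI using h
  let G : ℕ → {F // I F} := fun n =>
    Nat.rec ⟨∅, h0⟩ (fun n F => ⟨insert (y n F.1 F.2) F.1, hI n F.1 F.2⟩) n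
  have hG (n : ℕ) : (G n).1 = (Finset.range n).image fun j => y j (G j).1 (G j).2 := by
    induction n with
    | zero => rfl
    | succ n ih => rw [Finset.range_add_one, Finset.image_insert, ← ih]
  exact ⟨fun n => y n (G n).1 (G n).2, fun n => hG n ▸ hy n _ _⟩

theorem exists_countable_forall_finset_subset {α : Type*} (T : Finset α → Set α)
    (hT : ∀ F, (T F).Countable) :
    ∃ M : Set α, M.Countable ∧ ∀ F : Finset α, ↑F ⊆ M → T F ⊆ M := by
  set step : Set α → Set α := fun A => A ∪ ⋃ F ∈ {F : Finset α | ↑F ⊆ A}, T F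
  set M : ℕ → Set α := fun n => step^[n] ∅
  have hM_succ (n : ℕ) : M (n + 1) = step (M n) := iterate_succ_apply' step n ∅
  have hmono : Monotone M := monotone_nat_of_le_succ fun n => hM_succ n ▸ subset_union_left
  have hcount (n : ℕ) : (M n).Countable := by
    induction n with
    | zero => exact countable_empty
    | succ n ih =>
      rw [hM_succ]
      have hsub : {F : Finset α | ↑F ⊆ M n} ⊆ (↑) ⁻¹' {t | t.Finite ∧ t ⊆ M n} :=
        fun F hF => ⟨F.finite_toSet, hF⟩
      exact ih.union <| Countable.biUnion
        (((countable_ofPred_finite_subset ih).preimage Finset.coe_injective).mono hsub)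
        fun F _ => hT F
  refine ⟨⋃ n, M n, countable_iUnion hcount, fun F hF => ?_⟩
  obtain ⟨n, hn⟩ := hmono.directed_le.exists_mem_subset_of_finset_subset_biUnion hF
  have hstep : T F ⊆ M (n + 1) := by
    rw [hM_succ]
    exact (subset_biUnion_of_mem (u := T) (show F ∈ {F : Finset α | ↑F ⊆ M n} from hn)).trans
      subset_union_right
  exact hstep.trans (subset_iUnion M (n + 1))

section Construction

variable {X β : Type*} [TopologicalSpace X]

theorem exists_countable_forall_mem_closure_inter_fiber [SecondCountableTopology X] [Countable β]
    (f : X → β) : ∃ T : Set X, T.Countable ∧ ∀ z, z ∈ closure (T ∩ f ⁻¹' {f z}) := by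
  have (b : β) : ∃ t ⊆ f ⁻¹' {b}, t.Countable ∧ f ⁻¹' {b} ⊆ closure t := by
    obtain ⟨t, htc, htd⟩ := TopologicalSpace.exists_countable_dense (f ⁻¹' {b})
    exact ⟨(↑) '' t, Subtype.coe_image_subset _ _, htc.image _, Subtype.dense_iff.mp htd⟩
  choose t hts htc hdense using this
  refine ⟨⋃ b, t b, countable_iUnion htc, fun z => closure_mono ?_ (hdense (f z) rfl)⟩
  exact subset_inter (subset_iUnion t (f z)) (hts (f z))

def pattern [DecidableEq X] (χ : Finset X → β) (F : Finset X) (z : X) : F.powerset → β :=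
  fun s => χ (insert z s)

theorem exists_seq_tendsto_forall_insert_eq [T1Space X] [SecondCountableTopology X]
    [Uncountable X] [Countable β] [DecidableEq X] (χ : Finset X → β) :
    ∃ r : X, ∃ x : ℕ → X, Injective x ∧ (∀ n, x n ≠ r) ∧ Tendsto x atTop (𝓝 r) ∧
      ∀ n, ∀ s ⊆ (Finset.range n).image x, χ (insert (x n) s) = χ (insert r s) := by
  choose T hTc hT using fun F => exists_countable_forall_mem_closure_inter_fiber (pattern χ F)
  obtain ⟨M, hMc, hM⟩ := exists_countable_forall_finset_subset T hTc
  obtain ⟨r, hr⟩ : Mᶜ.Nonempty := nonempty_compl.mpr fun h => not_countable_univ (h ▸ hMc)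
  obtain ⟨U, hU⟩ := (𝓝 r).exists_antitone_basis
  have step (n : ℕ) (F : Finset X) (hF : ↑F ⊆ M) : ∃ y,
      (y ∈ U n ∧ y ∉ F ∧ y ≠ r ∧ pattern χ F y = pattern χ F r) ∧ ↑(insert y F) ⊆ M := by
    have hnhds : U n ∩ (↑F)ᶜ ∈ 𝓝 r :=
      inter_mem (hU.mem n) (F.finite_toSet.isClosed.isOpen_compl.mem_nhds fun h => hr (hF h))
    obtain ⟨y, ⟨hyU, hyF⟩, hyT, hyr⟩ := mem_closure_iff_nhds.mp (hT F r) _ hnhds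
    have hyM : y ∈ M := hM F hF hyT
    refine ⟨y, ⟨hyU, hyF, fun h => hr (h ▸ hyM), hyr⟩, ?_⟩
    rw [Finset.coe_insert]
    exact insert_subset hyM hF
  obtain ⟨x, hx⟩ := exists_seq_of_forall_finset_exists_insert
    (I := fun F : Finset X => (↑F : Set X) ⊆ M) (by simp) step
  simp only [forall_and] at hx
  obtain ⟨hxU, hxnew, hxr, hxpat⟩ := hx
  refine ⟨r, x, Injective.of_lt_imp_ne fun m n hmn h => hxnew n ?_, hxr, hU.tendsto hxU,
    fun n s hs => congrFun (hxpat n) ⟨s, Finset.mem_powerset.mpr hs⟩⟩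
  exact Finset.mem_image.mpr ⟨m, Finset.mem_range.mpr hmn, h⟩

end Construction

theorem infinite_monochromatic_with_limit_point_general
    (X : Type*) [MetricSpace X] [Uncountable X] [TopologicalSpace.SeparableSpace X]
    (k c : ℕ) (hk : 1 ≤ k) (χ : Finset X → Fin c) :
    ∃ Λ : Set X, Λ.Infinite ∧
      (∃ i : Fin c, ∀ s : Finset X, ↑s ⊆ Λ → s.card = k → χ s = i) ∧
      ∃ r ∈ Λ, ∀ ε : ℝ, 0 < ε → ∃ r' ∈ Λ, r' ≠ r ∧ dist r' r < ε := by
  classical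
  obtain ⟨r, x, hx, hxr, hlim, hend⟩ := exists_seq_tendsto_forall_insert_eq χ
  obtain ⟨S, hS, i, hmono⟩ := exists_infinite_isMonochromatic_insert_image χ hk hx hend
  refine ⟨insert r (x '' S), (hS.image hx.injOn).mono (subset_insert _ _), ⟨i, hmono⟩, r,
    mem_insert _ _, fun ε hε => ?_⟩
  obtain ⟨N, hN⟩ := Metric.tendsto_atTop.mp hlim ε hε
  obtain ⟨n, hnS, hNn⟩ := hS.exists_gt N
  exact ⟨x n, mem_insert_of_mem _ (mem_image_of_mem x hnS), hxr n, hN n hNn.le⟩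

/-- In an uncountable separable metric space, every coloring of the
k-element subsets with c colors admits an infinite monochromatic set containing
one of its limit points. -/
theorem infinite_monochromatic_with_limit_point
    (X : Type*) [MetricSpace X] [Uncountable X] [TopologicalSpace.SeparableSpace X]
    (k c : ℕ) (hk : 1 ≤ k) (hc : 1 ≤ c) (χ : Finset X → Fin c) :
    ∃ Λ : Set X, Λ.Infinite ∧
      (∃ i : Fin c, ∀ s : Finset X, ↑s ⊆ Λ → s.card = k → χ s = i) ∧
      ∃ r ∈ Λ, ∀ ε : ℝ, 0 < ε → ∃ r' ∈ Λ, r' ≠ r ∧ dist r' r < ε :=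
  infinite_monochromatic_with_limit_point_general X k c hk χ
end

section
/- Define χ on 3-element subsets {x₁, x₂, x₃} of ℝ with x₁ < x₂ < x₃ by χ = 0 if |x₁ - x₂| ≤ |x₂ - x₃| and χ = 1 otherwise. Then no subset Λ ⊆ ℝ that is monochromatic for χ has two distinct limit points. -/
/-!
If `l₁ < l₂` were two limit points of a monochromatic `Λ`, put `δ = (l₂ - l₁) / 4`. Two points
of `Λ` within `δ` of `l₁` followed by one within `δ` of `l₂` form a triple whose first gap is
the smaller, so of colour `0`; one point near `l₁` followed by two near `l₂` form a triple whose
first gap is the larger, so of colour `1`.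
-/

lemma exists_mem_lt_of_forall_abs_sub_lt {Λ : Set ℝ} {l ε : ℝ}
    (h : ∀ ε : ℝ, 0 < ε → ∃ y ∈ Λ, y ≠ l ∧ |y - l| < ε) (hε : 0 < ε) :
    ∃ a ∈ Λ, ∃ b ∈ Λ, a < b ∧ |a - l| < ε ∧ |b - l| < ε := by
  obtain ⟨y, hy, hyl, hyε⟩ := h ε hε
  obtain ⟨z, hz, -, hzy⟩ := h |y - l| (abs_pos.2 (sub_ne_zero.2 hyl))
  have hzε := hzy.trans hyε
  rcases lt_or_gt_of_ne (ne_of_apply_ne (fun x => |x - l|) hzy.ne) with hlt | hlt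
  · exact ⟨z, hz, y, hy, hlt, hzε, hyε⟩
  · exact ⟨y, hy, z, hz, hlt, hyε, hzε⟩

lemma color_triple_of_lt {χ : Finset ℝ → ℕ}
    (hχ : ∀ x₁ x₂ x₃ : ℝ, x₁ < x₂ → x₂ < x₃ →
      χ {x₁, x₂, x₃} = if |x₁ - x₂| ≤ |x₂ - x₃| then 0 else 1)
    {Λ : Set ℝ} {i : ℕ} (hmono : ∀ s : Finset ℝ, ↑s ⊆ Λ → s.card = 3 → χ s = i)
    {a b c : ℝ} (ha : a ∈ Λ) (hb : b ∈ Λ) (hc : c ∈ Λ) (hab : a < b) (hbc : b < c) :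
    (if b - a ≤ c - b then 0 else 1) = i := by
  have hcard : ({a, b, c} : Finset ℝ).card = 3 :=
    Finset.card_eq_three.2 ⟨a, b, c, hab.ne, (hab.trans hbc).ne, hbc.ne, rfl⟩
  have hsub : ↑({a, b, c} : Finset ℝ) ⊆ Λ := by simp [Set.insert_subset_iff, ha, hb, hc]
  rw [← hmono _ hsub hcard, hχ a b c hab hbc, abs_sub_comm a b, abs_sub_comm b c,
    abs_of_pos (sub_pos.2 hab), abs_of_pos (sub_pos.2 hbc)]

lemma not_lt_of_monochromatic {χ : Finset ℝ → ℕ}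
    (hχ : ∀ x₁ x₂ x₃ : ℝ, x₁ < x₂ → x₂ < x₃ →
      χ {x₁, x₂, x₃} = if |x₁ - x₂| ≤ |x₂ - x₃| then 0 else 1)
    {Λ : Set ℝ} {i : ℕ} (hmono : ∀ s : Finset ℝ, ↑s ⊆ Λ → s.card = 3 → χ s = i)
    {l₁ l₂ : ℝ}
    (h₁ : ∀ ε : ℝ, 0 < ε → ∃ y ∈ Λ, y ≠ l₁ ∧ |y - l₁| < ε)
    (h₂ : ∀ ε : ℝ, 0 < ε → ∃ y ∈ Λ, y ≠ l₂ ∧ |y - l₂| < ε) :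
    ¬ l₁ < l₂ := by
  intro hlt
  have hδ : 0 < (l₂ - l₁) / 4 := by linarith
  obtain ⟨a, ha, b, hb, hab, haδ, hbδ⟩ := exists_mem_lt_of_forall_abs_sub_lt h₁ hδ
  obtain ⟨c, hc, -, hcδ⟩ := h₂ _ hδ
  obtain ⟨b', hb', c', hc', hbc', hb'δ, hc'δ⟩ := exists_mem_lt_of_forall_abs_sub_lt h₂ hδ
  obtain ⟨a', ha', -, ha'δ⟩ := h₁ _ hδ
  rw [abs_lt] at haδ hbδ hcδ hb'δ hc'δ ha'δ
  have hcolor₀ := color_triple_of_lt hχ hmono ha hb hc hab (by linarith)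
  have hcolor₁ := color_triple_of_lt hχ hmono ha' hb' hc' (by linarith) hbc'
  rw [if_pos (by linarith)] at hcolor₀
  rw [if_neg (by linarith)] at hcolor₁
  exact absurd (hcolor₀.trans hcolor₁.symm) zero_ne_one

/-- for the min-distance coloring of triples of reals, a monochromatic
set has at most one limit point. -/
theorem monochromatic_at_most_one_limit_point
    (χ : Finset ℝ → ℕ)
    (hχ : ∀ x₁ x₂ x₃ : ℝ, x₁ < x₂ → x₂ < x₃ →
      χ {x₁, x₂, x₃} = if |x₁ - x₂| ≤ |x₂ - x₃| then 0 else 1)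
    (Λ : Set ℝ)
    (hmono : ∃ i : ℕ, ∀ s : Finset ℝ, ↑s ⊆ Λ → s.card = 3 → χ s = i)
    (l₁ l₂ : ℝ)
    (h₁ : ∀ ε : ℝ, 0 < ε → ∃ y ∈ Λ, y ≠ l₁ ∧ |y - l₁| < ε)
    (h₂ : ∀ ε : ℝ, 0 < ε → ∃ y ∈ Λ, y ≠ l₂ ∧ |y - l₂| < ε) :
    l₁ = l₂ := by
  obtain ⟨i, hi⟩ := hmono
  exact le_antisymm (not_lt.1 (not_lt_of_monochromatic hχ hi h₂ h₁))
    (not_lt.1 (not_lt_of_monochromatic hχ hi h₁ h₂))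
end

section
/- Let (Ψ_n)_{n∈ℕ} be an enumeration (bijection ℕ → ℚ) of the rationals, inducing the well-order Ψ_i ≼ Ψ_j iff i ≤ j. If Λ ⊆ ℚ is an infinite set containing one of its limit points, then there exist r₁, r₂, r₃ ∈ Λ with r₁ < r₂ < r₃ (in the usual order of ℚ), r₁ ≼ r₂, and r₃ ≼ r₂. -/
/-!
The limit point `r` is approached from one side, say from the right. Take `r₃ ∈ Λ` with
`r < r₃`. As `Ψ.symm` is injective, only finitely many rationals have index at most
`max (Ψ.symm r) (Ψ.symm r₃)`, so some `r₂ ∈ Λ` between `r` and `r₃` has a larger index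
than both, and `(r, r₂, r₃)` is the triple.
-/

open Filter Topology Set Function

theorem frequently_nhdsNE_iff_abs_sub_lt {α : Type*} [TopologicalSpace α] [AddCommGroup α]
    [LinearOrder α] [IsOrderedAddMonoid α] [OrderTopology α] [NoMaxOrder α] {s : Set α} {r : α} :
    (∃ᶠ y in 𝓝[≠] r, y ∈ s) ↔ ∀ ε, 0 < ε → ∃ y ∈ s, y ≠ r ∧ |y - r| < ε := by
  refine (((nhds_basis_abs_sub_lt r).inf_principal {r}ᶜ).frequently_iff).trans ?_
  simp only [mem_inter_iff, mem_ofPred_eq, mem_compl_singleton_iff]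
  exact forall₂_congr fun _ _ => exists_congr fun _ => by tauto

section PeakTriple

variable {α : Type*} [LinearOrder α] [TopologicalSpace α] [OrderTopology α]
  {f : α → ℕ} {s : Set α} {r : α}

theorem Function.Injective.frequently_nhdsGT_and_le (hf : Injective f)
    (h : ∃ᶠ y in 𝓝[>] r, y ∈ s) (N : ℕ) : ∃ᶠ y in 𝓝[>] r, y ∈ s ∧ N ≤ f y :=
  have hcofinite : 𝓝[>] r ≤ cofinite :=
    (nhdsWithin_mono r fun _ hy => ne_of_gt hy).trans (nhdsNE_le_cofinite r)
  h.and_eventually <| hcofinite <|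
    (Nat.cofinite_eq_atTop ▸ hf.tendsto_cofinite).eventually_ge_atTop N

theorem exists_peak_triple_of_frequently_nhdsGT (hf : Injective f) (hr : r ∈ s)
    (h : ∃ᶠ y in 𝓝[>] r, y ∈ s) :
    ∃ a ∈ s, ∃ b ∈ s, ∃ c ∈ s, a < b ∧ b < c ∧ f a ≤ f b ∧ f c ≤ f b := by
  obtain ⟨c, hc, hrc⟩ := (h.and_eventually self_mem_nhdsWithin).exists
  obtain ⟨b, ⟨hb, hfb⟩, hrb, hbc⟩ :=
    ((hf.frequently_nhdsGT_and_le h (max (f r) (f c))).and_eventually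
      (Ioo_mem_nhdsGT hrc)).exists
  exact ⟨r, hr, b, hb, c, hc, hrb, hbc, le_of_max_le_left hfb, le_of_max_le_right hfb⟩

theorem exists_peak_triple_of_frequently_nhdsNE (hf : Injective f) (hr : r ∈ s)
    (h : ∃ᶠ y in 𝓝[≠] r, y ∈ s) :
    ∃ a ∈ s, ∃ b ∈ s, ∃ c ∈ s, a < b ∧ b < c ∧ f a ≤ f b ∧ f c ≤ f b := by
  rw [← nhdsLT_sup_nhdsGT, frequently_sup] at h
  rcases h with hlt | hgt
  · -- the left-sided case is the right-sided one for the reversed order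
    obtain ⟨c, hc, b, hb, a, ha, hcb, hba, hfc, hfa⟩ :=
      exists_peak_triple_of_frequently_nhdsGT (α := αᵒᵈ) (f := f ∘ OrderDual.ofDual)
        hf (r := OrderDual.toDual r) hr hlt
    exact ⟨a, ha, b, hb, c, hc, hba, hcb, hfa, hfc⟩
  · exact exists_peak_triple_of_frequently_nhdsGT hf hr hgt

end PeakTriple

theorem special_triple_exists_general
    (Ψ : ℕ ≃ ℚ) (Λ : Set ℚ)
    (r : ℚ) (hr : r ∈ Λ)
    (hlim : ∀ ε : ℚ, 0 < ε → ∃ y ∈ Λ, y ≠ r ∧ |y - r| < ε) :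
    ∃ r₁ ∈ Λ, ∃ r₂ ∈ Λ, ∃ r₃ ∈ Λ, r₁ < r₂ ∧ r₂ < r₃ ∧
      Ψ.symm r₁ ≤ Ψ.symm r₂ ∧ Ψ.symm r₃ ≤ Ψ.symm r₂ :=
  exists_peak_triple_of_frequently_nhdsNE Ψ.symm.injective hr
    (frequently_nhdsNE_iff_abs_sub_lt.mpr hlim)

/-- if an infinite set of rationals contains one of its limit points,
then it contains r₁ < r₂ < r₃ with r₁ ≼ r₂ and r₃ ≼ r₂ in the enumeration order. -/
theorem special_triple_exists
    (Ψ : ℕ ≃ ℚ) (Λ : Set ℚ) (hinf : Λ.Infinite)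
    (r : ℚ) (hr : r ∈ Λ)
    (hlim : ∀ ε : ℚ, 0 < ε → ∃ y ∈ Λ, y ≠ r ∧ |y - r| < ε) :
    ∃ r₁ ∈ Λ, ∃ r₂ ∈ Λ, ∃ r₃ ∈ Λ, r₁ < r₂ ∧ r₂ < r₃ ∧
      Ψ.symm r₁ ≤ Ψ.symm r₂ ∧ Ψ.symm r₃ ≤ Ψ.symm r₂ :=
  special_triple_exists_general Ψ Λ r hr hlim
end

section
/- Let (Ψ_n) be an enumeration of ℚ with induced well-order ≼ (Ψ_i ≼ Ψ_j iff i ≤ j). Define χ on pairs {x₁, x₂} with x₁ < x₂ by χ = 0 if x₂ ≼ x₁ and χ = 1 if x₁ ≼ x₂. Then there is no infinite subset of ℚ, monochromatic for χ, that contains one of its limit points. -/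
/-! All pairs of a monochromatic set `Λ` get the same color, so the enumeration index `Ψ.symm` is
strictly monotone or strictly antitone on `Λ`. In the monotone case only finitely many points of `Λ`
lie below a point `r ∈ Λ` (their indices are below that of `r`), and no point of `Λ` lies strictly
between `r` and the point of `Λ` above `r` of least index. So `r` is isolated in `Λ`; the antitone
case is the same argument in the reversed order. -/

open Set

section Coloring

variable {α : Type*} [LinearOrder α] [DecidableEq α]

theorem strictMonoOn_or_strictAntiOn_of_monochromatic {e : α → ℕ} (he : Function.Injective e)
    {χ : Finset α → ℕ}
    (hχ : ∀ x₁ x₂ : α, x₁ < x₂ → χ {x₁, x₂} = if e x₂ ≤ e x₁ then 0 else 1)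
    {Λ : Set α} {i : ℕ} (hΛ : ∀ s : Finset α, ↑s ⊆ Λ → s.card = 2 → χ s = i) :
    StrictMonoOn e Λ ∨ StrictAntiOn e Λ := by
  have hpair : ∀ x ∈ Λ, ∀ y ∈ Λ, x < y → (if e y ≤ e x then 0 else 1) = i :=
    fun x hx y hy hxy => (hχ x y hxy).symm.trans
      (hΛ {x, y} (by simp [insert_subset_iff, hx, hy]) (Finset.card_pair hxy.ne))
  rcases eq_or_ne i 0 with rfl | hi
  · refine .inr fun x hx y hy hxy => ?_
    have h := hpair x hx y hy hxy
    split_ifs at h with hle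
    exact hle.lt_of_ne (he.ne hxy.ne')
  · refine .inl fun x hx y hy hxy => ?_
    have h := hpair x hx y hy hxy
    split_ifs at h with hle
    · exact absurd h.symm hi
    · exact not_le.1 hle

end Coloring

section Isolated

variable {α : Type*} [LinearOrder α] {s : Set α} {f : α → ℕ} {r : α}

theorem StrictMonoOn.finite_inter_Iio (hf : StrictMonoOn f s) (hr : r ∈ s) :
    (s ∩ Iio r).Finite :=
  Finite.of_finite_image ((finite_Iio (f r)).subset <| image_subset_iff.2
    fun _ hy => hf hy.1 hr hy.2) (hf.injOn.mono inter_subset_left)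

theorem StrictMonoOn.exists_lt_inter_Ioo_eq_empty [NoMinOrder α] (hf : StrictMonoOn f s)
    (hr : r ∈ s) : ∃ a < r, s ∩ Ioo a r = ∅ := by
  rcases (s ∩ Iio r).eq_empty_or_nonempty with hempty | hne
  · obtain ⟨a, ha⟩ := exists_lt r
    exact ⟨a, ha, subset_empty_iff.1 <| hempty ▸ inter_subset_inter_right s Ioo_subset_Iio_self⟩
  · obtain ⟨a, ⟨-, ha⟩, hmax⟩ := (s ∩ Iio r).exists_max_image id (hf.finite_inter_Iio hr) hne
    refine ⟨a, ha, eq_empty_of_forall_notMem fun y ⟨hy, hay, hyr⟩ => ?_⟩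
    exact (hmax y ⟨hy, hyr⟩).not_gt hay

theorem StrictMonoOn.exists_gt_inter_Ioo_eq_empty [NoMaxOrder α] (hf : StrictMonoOn f s) :
    ∃ b > r, s ∩ Ioo r b = ∅ := by
  rcases (s ∩ Ioi r).eq_empty_or_nonempty with hempty | hne
  · obtain ⟨b, hb⟩ := exists_gt r
    exact ⟨b, hb, subset_empty_iff.1 <| hempty ▸ inter_subset_inter_right s Ioo_subset_Ioi_self⟩
  · obtain ⟨hb, hrb⟩ := Function.argminOn_mem f (s ∩ Ioi r) hne
    refine ⟨_, hrb, eq_empty_of_forall_notMem fun y ⟨hy, hry, hyb⟩ => ?_⟩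
    exact Function.not_lt_argminOn f (s ∩ Ioi r) ⟨hy, hry⟩ (hf hy hb hyb)

theorem StrictMonoOn.exists_inter_Ioo_subset_singleton [NoMinOrder α] [NoMaxOrder α]
    (hf : StrictMonoOn f s) (hr : r ∈ s) : ∃ a < r, ∃ b > r, s ∩ Ioo a b ⊆ {r} := by
  obtain ⟨a, har, ha⟩ := hf.exists_lt_inter_Ioo_eq_empty hr
  obtain ⟨b, hrb, hb⟩ := hf.exists_gt_inter_Ioo_eq_empty (r := r)
  refine ⟨a, har, b, hrb, fun y ⟨hy, hay, hyb⟩ => ?_⟩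
  rcases lt_trichotomy y r with hyr | rfl | hry
  · exact (ha.subset ⟨hy, hay, hyr⟩).elim
  · rfl
  · exact (hb.subset ⟨hy, hry, hyb⟩).elim

theorem StrictAntiOn.exists_inter_Ioo_subset_singleton [NoMinOrder α] [NoMaxOrder α]
    (hf : StrictAntiOn f s) (hr : r ∈ s) : ∃ a < r, ∃ b > r, s ∩ Ioo a b ⊆ {r} := by
  obtain ⟨b, hrb, a, har, hab⟩ :=
    hf.dual_left.exists_inter_Ioo_subset_singleton (s := OrderDual.ofDual ⁻¹' s) hr
  exact ⟨a, har, b, hrb, fun y ⟨hy, hay, hyb⟩ => hab ⟨hy, hyb, hay⟩⟩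

end Isolated

theorem exists_pos_le_abs_sub_of_inter_Ioo_subset_singleton {K : Type*} [Field K] [LinearOrder K]
    [IsStrictOrderedRing K] {s : Set K} {a b r : K} (har : a < r) (hrb : r < b)
    (hs : s ∩ Ioo a b ⊆ {r}) : ∃ ε > 0, ∀ y ∈ s, y ≠ r → ε ≤ |y - r| := by
  refine ⟨min (r - a) (b - r), lt_min (sub_pos.2 har) (sub_pos.2 hrb), fun y hy hyr => ?_⟩
  by_contra! hclose
  rw [abs_sub_lt_iff, lt_min_iff, lt_min_iff] at hclose
  exact hyr (hs ⟨hy, by linarith, by linarith⟩)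

/-- Sierpiński's coloring of pairs of rationals admits no infinite
monochromatic set containing one of its limit points. -/
theorem sierpinski_no_monochromatic_with_limit_point
    (Ψ : ℕ ≃ ℚ) (χ : Finset ℚ → ℕ)
    (hχ : ∀ x₁ x₂ : ℚ, x₁ < x₂ →
      χ {x₁, x₂} = if Ψ.symm x₂ ≤ Ψ.symm x₁ then 0 else 1) :
    ¬ ∃ Λ : Set ℚ, Λ.Infinite ∧
      (∃ i : ℕ, ∀ s : Finset ℚ, ↑s ⊆ Λ → s.card = 2 → χ s = i) ∧
      ∃ r ∈ Λ, ∀ ε : ℚ, 0 < ε → ∃ y ∈ Λ, y ≠ r ∧ |y - r| < ε := by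
  rintro ⟨Λ, -, ⟨i, hΛ⟩, r, hr, hlim⟩
  obtain ⟨a, har, b, hrb, hab⟩ : ∃ a < r, ∃ b > r, Λ ∩ Ioo a b ⊆ {r} :=
    (strictMonoOn_or_strictAntiOn_of_monochromatic Ψ.symm.injective hχ hΛ).elim
      (·.exists_inter_Ioo_subset_singleton hr) (·.exists_inter_Ioo_subset_singleton hr)
  obtain ⟨ε, hε, hfar⟩ := exists_pos_le_abs_sub_of_inter_Ioo_subset_singleton har hrb hab
  obtain ⟨y, hy, hyr, hclose⟩ := hlim ε hε
  exact (hfar y hy hyr).not_gt hclose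
end

section
/- Let (Ψ_n) be an enumeration of ℚ with induced well-order ≼. Define χ on 3-element subsets {x₁, x₂, x₃} with x₁ < x₂ < x₃ by χ = 0 if x₁ ≼ x₂ and x₃ ≼ x₂, and χ = 1 otherwise. Then there is no 4-element subset {r₁, r₂, r₃, r₄} ⊆ ℚ all of whose 3-element subsets are colored 0. -/
/-!
A triple colored 0 has its middle element as the `≼`-largest of the three. In `r₁ < r₂ < r₃ < r₄`
the triples `{r₁, r₂, r₃}` and `{r₂, r₃, r₄}` would then force both `r₃ ≼ r₂` and `r₂ ≼ r₃`,
so `r₂ = r₃`.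
-/

theorem Finset.card_triple_of_lt {α : Type*} [LinearOrder α] {a b c : α} (hab : a < b)
    (hbc : b < c) : ({a, b, c} : Finset α).card = 3 :=
  Finset.card_eq_three.mpr ⟨a, b, c, hab.ne, (hab.trans hbc).ne, hbc.ne, rfl⟩

theorem le_middle_of_color_eq_zero {α β : Type*} [LinearOrder α] [Preorder β] [DecidableLE β]
    (rank : α → β) (χ : Finset α → ℕ)
    (hχ : ∀ x₁ x₂ x₃ : α, x₁ < x₂ → x₂ < x₃ →
      χ {x₁, x₂, x₃} = if rank x₁ ≤ rank x₂ ∧ rank x₃ ≤ rank x₂ then 0 else 1)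
    {x₁ x₂ x₃ : α} (h₁₂ : x₁ < x₂) (h₂₃ : x₂ < x₃) (hzero : χ {x₁, x₂, x₃} = 0) :
    rank x₁ ≤ rank x₂ ∧ rank x₃ ≤ rank x₂ := by
  rw [hχ x₁ x₂ x₃ h₁₂ h₂₃] at hzero
  split_ifs at hzero with hpeak
  exact hpeak

/-- for the enumeration-order coloring of triples of rationals, no
4-element set has all its 3-element subsets colored 0. -/
theorem no_four_element_zero_colored
    (Ψ : ℕ ≃ ℚ) (χ : Finset ℚ → ℕ)
    (hχ : ∀ x₁ x₂ x₃ : ℚ, x₁ < x₂ → x₂ < x₃ →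
      χ {x₁, x₂, x₃} = if Ψ.symm x₁ ≤ Ψ.symm x₂ ∧ Ψ.symm x₃ ≤ Ψ.symm x₂ then 0 else 1) :
    ¬ ∃ r₁ r₂ r₃ r₄ : ℚ, r₁ < r₂ ∧ r₂ < r₃ ∧ r₃ < r₄ ∧
      (∀ s : Finset ℚ, s ⊆ {r₁, r₂, r₃, r₄} → s.card = 3 → χ s = 0) := by
  rintro ⟨r₁, r₂, r₃, r₄, h₁₂, h₂₃, h₃₄, hzero⟩
  have hlow := le_middle_of_color_eq_zero Ψ.symm χ hχ h₁₂ h₂₃ <|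
    hzero _ (by intro x; simp only [Finset.mem_insert, Finset.mem_singleton]; tauto)
      (Finset.card_triple_of_lt h₁₂ h₂₃)
  have hhigh := le_middle_of_color_eq_zero Ψ.symm χ hχ h₂₃ h₃₄ <|
    hzero _ (by intro x; simp only [Finset.mem_insert, Finset.mem_singleton]; tauto)
      (Finset.card_triple_of_lt h₂₃ h₃₄)
  exact h₂₃.ne (Ψ.symm.injective (le_antisymm hhigh.1 hlow.2))
end

section
/- Define χ on 3-element subsets {x₁, x₂, x₃} of ℝ with x₁ < x₂ < x₃ by χ = 0 if |x₁ - x₂| ≤ |x₂ - x₃| and χ = 1 otherwise. For every coloring of the 3-element subsets of ℝ there exists (by the main theorem) an infinite monochromatic set containing one of its limit points; show that for this particular χ, every infinite monochromatic set Λ containing a limit point r ∈ Λ satisfies: r is the unique limit point of Λ. -/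
/-!
If `a < b` were two limit points of a monochromatic `Λ`, take `u < v` in `Λ` close to `a` and
`p < q` in `Λ` close to `b`. The triple `u < v < p` has a short gap followed by a long one, so it
gets colour `0`, while `u < p < q` has a long gap followed by a short one, so it gets colour `1`.
-/

def IsLimitPoint {α : Type*} [AddCommGroup α] [LinearOrder α] (Λ : Set α) (c : α) : Prop :=
  ∀ ε : α, 0 < ε → ∃ y ∈ Λ, y ≠ c ∧ |y - c| < ε

theorem IsLimitPoint.exists_lt_pair {α : Type*} [AddCommGroup α] [LinearOrder α]
    [IsOrderedAddMonoid α] {Λ : Set α} {c : α} (hc : IsLimitPoint Λ c) {ε : α} (hε : 0 < ε) :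
    ∃ u ∈ Λ, ∃ v ∈ Λ, u < v ∧ |u - c| < ε ∧ |v - c| < ε := by
  obtain ⟨y, hyΛ, hyc, hy⟩ := hc ε hε
  -- a second point strictly closer to `c` than `y` is automatically different from `y`
  obtain ⟨z, hzΛ, -, hz⟩ := hc |y - c| (abs_pos.mpr (sub_ne_zero.mpr hyc))
  have hzy : z ≠ y := by
    rintro rfl
    exact lt_irrefl _ hz
  rcases lt_or_gt_of_ne hzy with h | h
  · exact ⟨z, hzΛ, y, hyΛ, h, hz.trans hy, hy⟩
  · exact ⟨y, hyΛ, z, hzΛ, h, hy, hz.trans hy⟩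

section MinDistanceColoring

variable {χ : Finset ℝ → ℕ}
  (hχ : ∀ x₁ x₂ x₃ : ℝ, x₁ < x₂ → x₂ < x₃ →
    χ {x₁, x₂, x₃} = if |x₁ - x₂| ≤ |x₂ - x₃| then 0 else 1)

include hχ in
theorem minDistanceColoring_eq_of_lt {x y z : ℝ} (hxy : x < y) (hyz : y < z) :
    χ {x, y, z} = if y - x ≤ z - y then 0 else 1 := by
  rw [hχ x y z hxy hyz, abs_sub_comm x y, abs_of_pos (sub_pos.mpr hxy), abs_sub_comm y z,
    abs_of_pos (sub_pos.mpr hyz)]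

theorem color_eq_of_subset_of_lt {Λ : Set ℝ} {i : ℕ}
    (hΛ : ∀ s : Finset ℝ, ↑s ⊆ Λ → s.card = 3 → χ s = i) {x y z : ℝ}
    (hx : x ∈ Λ) (hy : y ∈ Λ) (hz : z ∈ Λ) (hxy : x < y) (hyz : y < z) :
    χ {x, y, z} = i := by
  refine hΛ _ ?_ (Finset.card_eq_three.mpr ⟨x, y, z, hxy.ne, (hxy.trans hyz).ne, hyz.ne, rfl⟩)
  simp only [Finset.coe_insert, Finset.coe_singleton, Set.insert_subset_iff,
    Set.singleton_subset_iff]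
  exact ⟨hx, hy, hz⟩

include hχ in
theorem not_isLimitPoint_pair_of_monochromatic {Λ : Set ℝ} {i : ℕ}
    (hΛ : ∀ s : Finset ℝ, ↑s ⊆ Λ → s.card = 3 → χ s = i) {a b : ℝ} (hab : a < b)
    (ha : IsLimitPoint Λ a) (hb : IsLimitPoint Λ b) : False := by
  have hε : 0 < (b - a) / 4 := by linarith
  obtain ⟨u, huΛ, v, hvΛ, huv, hu, hv⟩ := ha.exists_lt_pair hε
  obtain ⟨p, hpΛ, q, hqΛ, hpq, hp, hq⟩ := hb.exists_lt_pair hε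
  rw [abs_lt] at hu hv hp hq
  have hvp : v < p := by linarith
  have hup : u < p := huv.trans hvp
  have short_long : χ {u, v, p} = 0 :=
    (minDistanceColoring_eq_of_lt hχ huv hvp).trans (if_pos (by linarith))
  have long_short : χ {u, p, q} = 1 :=
    (minDistanceColoring_eq_of_lt hχ hup hpq).trans (if_neg (by linarith))
  rw [color_eq_of_subset_of_lt hΛ huΛ hvΛ hpΛ huv hvp] at short_long
  rw [color_eq_of_subset_of_lt hΛ huΛ hpΛ hqΛ hup hpq, short_long] at long_short
  exact zero_ne_one long_short

end MinDistanceColoring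

theorem limit_point_unique_for_min_distance_coloring_general
    (χ : Finset ℝ → ℕ)
    (hχ : ∀ x₁ x₂ x₃ : ℝ, x₁ < x₂ → x₂ < x₃ →
      χ {x₁, x₂, x₃} = if |x₁ - x₂| ≤ |x₂ - x₃| then 0 else 1)
    (Λ : Set ℝ)
    (hmono : ∃ i : ℕ, ∀ s : Finset ℝ, ↑s ⊆ Λ → s.card = 3 → χ s = i)
    (r : ℝ)
    (hlim : ∀ ε : ℝ, 0 < ε → ∃ y ∈ Λ, y ≠ r ∧ |y - r| < ε) :
    ∀ l : ℝ, (∀ ε : ℝ, 0 < ε → ∃ y ∈ Λ, y ≠ l ∧ |y - l| < ε) → l = r := by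
  obtain ⟨i, hΛ⟩ := hmono
  intro l hl
  by_contra hlr
  rcases lt_or_gt_of_ne hlr with h | h
  · exact not_isLimitPoint_pair_of_monochromatic hχ hΛ h hl hlim
  · exact not_isLimitPoint_pair_of_monochromatic hχ hΛ h hlim hl

/-- for the min-distance coloring of triples of reals, any infinite
monochromatic set containing a limit point r has r as its unique limit point. -/
theorem limit_point_unique_for_min_distance_coloring
    (χ : Finset ℝ → ℕ)
    (hχ : ∀ x₁ x₂ x₃ : ℝ, x₁ < x₂ → x₂ < x₃ →
      χ {x₁, x₂, x₃} = if |x₁ - x₂| ≤ |x₂ - x₃| then 0 else 1)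
    (Λ : Set ℝ) (hinf : Λ.Infinite)
    (hmono : ∃ i : ℕ, ∀ s : Finset ℝ, ↑s ⊆ Λ → s.card = 3 → χ s = i)
    (r : ℝ) (hr : r ∈ Λ)
    (hlim : ∀ ε : ℝ, 0 < ε → ∃ y ∈ Λ, y ≠ r ∧ |y - r| < ε) :
    ∀ l : ℝ, (∀ ε : ℝ, 0 < ε → ∃ y ∈ Λ, y ≠ l ∧ |y - l| < ε) → l = r :=
  limit_point_unique_for_min_distance_coloring_general χ hχ Λ hmono r hlim
end

section
/- Every countable dense-in-itself metric space X admits a coloring χ of its 2-element subsets with 2 colors such that no infinite monochromatic subset of X contains one of its limit points. (In particular this holds for X = ℚ.) -/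
/-!
A countable metric space is totally separated, since a ball whose radius avoids the countably many
distances to its centre is clopen; separating the countably many pairs of points by clopen sets
and feeding the indicator sequences into a Cantor-type function gives a continuous injection
`φ : X → ℝ`. Colour a pair by whether `φ` and a fixed enumeration of `X` order it the same way
(Sierpiński). On a monochromatic set `Λ`, `φ` or `-φ` then increases along the enumeration, and
continuity of `φ` at a point `r ∈ Λ` isolates `r` in `Λ`.
-/

open Set Filter Topology Cardinal

theorem continuous_cantorFunction {c : ℝ} (hc : |c| < 1) : Continuous (cantorFunction c) := by
  refine continuous_tsum (fun n => ?_) (summable_geometric_of_lt_one (abs_nonneg c) hc)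
    fun n f => ?_
  · exact (continuous_of_discreteTopology (f := fun b : Bool => cond b (c ^ n) 0)).comp
      (continuous_apply n)
  · cases h : f n <;> simp [cantorFunctionAux, h]

theorem totallySeparatedSpace_of_countable (X : Type*) [MetricSpace X] [Countable X] :
    TotallySeparatedSpace X := by
  refine totallySeparatedSpace_iff_exists_isClopen.mpr fun x y hxy => ?_
  obtain ⟨t, ht, ht0, hty⟩ := ((countable_range fun z => dist z x).dense_compl ℝ).exists_between
    (dist_pos.2 hxy.symm)
  have hball : Metric.ball x t = Metric.closedBall x t := by
    ext z
    simp only [Metric.mem_ball, Metric.mem_closedBall]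
    exact ⟨le_of_lt, fun hz => lt_of_le_of_ne hz fun h => ht ⟨z, h⟩⟩
  exact ⟨Metric.ball x t, ⟨hball ▸ Metric.isClosed_closedBall, Metric.isOpen_ball⟩,
    Metric.mem_ball_self ht0, fun hy => (Metric.mem_ball.1 hy).not_ge hty.le⟩

theorem exists_continuous_injective_nat_bool (X : Type*) [TopologicalSpace X]
    [TotallySeparatedSpace X] [Countable X] :
    ∃ f : X → ℕ → Bool, Continuous f ∧ Function.Injective f := by
  rcases isEmpty_or_nonempty X with hX | hX
  · exact ⟨isEmptyElim, continuous_of_discreteTopology, Function.injective_of_subsingleton _⟩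
  obtain ⟨u, hu⟩ := exists_surjective_nat (X × X)
  have hsep : ∀ p : X × X, ∃ U : Set X, IsClopen U ∧ (p.1 ≠ p.2 → p.1 ∈ U ∧ p.2 ∉ U) := by
    intro p
    by_cases h : p.1 = p.2
    · exact ⟨∅, isClopen_empty, absurd h⟩
    · obtain ⟨U, hU, h1, h2⟩ := exists_isClopen_of_totally_separated h
      exact ⟨U, hU, fun _ => ⟨h1, h2⟩⟩
  choose U hU hUsep using hsep
  refine ⟨fun x n => (U (u n)).boolIndicator x,
    continuous_pi fun n => (continuous_boolIndicator_iff_isClopen _).2 (hU _), fun x y hxy => ?_⟩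
  by_contra hne
  obtain ⟨n, hn⟩ := hu (x, y)
  have := congr_fun hxy n
  have hxU := hUsep (u n) (by simpa [hn] using hne)
  simp only [hn] at this hxU
  simp [Set.boolIndicator, hxU.1, hxU.2] at this

theorem exists_continuous_injective_real (X : Type*) [TopologicalSpace X]
    [TotallySeparatedSpace X] [Countable X] :
    ∃ φ : X → ℝ, Continuous φ ∧ Function.Injective φ := by
  obtain ⟨f, hfc, hfi⟩ := exists_continuous_injective_nat_bool X
  exact ⟨cantorFunction (1 / 3) ∘ f,
    (continuous_cantorFunction (by norm_num [abs_of_pos])).comp hfc,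
    (cantorFunction_injective (by norm_num) (by norm_num)).comp hfi⟩

-- If some `y₀ ∈ Λ` comes after `r`, the neighbourhood `{φ < φ y₀}` excludes every point of `Λ`
-- enumerated after `y₀`; the finitely many points enumerated before are removed by a cofinite one.
theorem not_accPt_of_increasing_along_enumeration {X α : Type*} [TopologicalSpace X] [T1Space X]
    [LinearOrder α] [TopologicalSpace α] [OrderTopology α] {ι : X → ℕ} (hι : Function.Injective ι)
    {φ : X → α} {Λ : Set X} {r : X} (hr : r ∈ Λ) (hφ : ContinuousAt φ r)
    (hmono : ∀ a ∈ Λ, ∀ b ∈ Λ, ι a < ι b → φ a < φ b) :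
    ¬ AccPt r (𝓟 Λ) := by
  have hfin : ∀ n, ({y ∈ Λ | ι y < n} \ {r}).Finite := fun n =>
    (((finite_Iio n).preimage hι.injOn).subset fun y hy => hy.2).sdiff
  have hcofin : ∀ n, ({y ∈ Λ | ι y < n} \ {r})ᶜ ∈ 𝓝 r := fun n =>
    (hfin n).isClosed.compl_mem_nhds fun h => h.2 rfl
  rw [accPt_iff_nhds]
  push Not
  by_cases hafter : ∃ y₀ ∈ Λ, ι r < ι y₀
  · obtain ⟨y₀, hy₀, hry₀⟩ := hafter
    refine ⟨_, inter_mem (hφ.preimage_mem_nhds (Iio_mem_nhds (hmono r hr y₀ hy₀ hry₀)))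
      (hcofin (ι y₀)), fun y ⟨⟨hφy, hy⟩, hyΛ⟩ => by_contra fun hne => ?_⟩
    have hle : ι y₀ ≤ ι y := not_lt.1 fun h => hy ⟨⟨hyΛ, h⟩, hne⟩
    rcases hle.lt_or_eq with hlt | heq
    · exact (hmono y₀ hy₀ y hyΛ hlt).not_gt hφy
    · exact (hι heq ▸ hφy : φ y₀ < φ y₀).false
  · push Not at hafter
    exact ⟨_, hcofin (ι r + 1), fun y ⟨hy, hyΛ⟩ => by_contra fun hne =>
      hy ⟨⟨hyΛ, Nat.lt_succ_of_le (hafter y hyΛ)⟩, hne⟩⟩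

section SierpinskiColoring

variable {X α β : Type*} [LinearOrder α] [LinearOrder β]

open Classical in
noncomputable def sierpinskiColoring (ι : X → α) (φ : X → β) (s : Finset X) : Fin 2 :=
  if ∃ a ∈ s, ∃ b ∈ s, ι a < ι b ∧ φ a < φ b then 0 else 1

theorem sierpinskiColoring_pair_eq_zero_iff [DecidableEq X] {ι : X → α} {φ : X → β} {a b : X}
    (h : ι a < ι b) :
    sierpinskiColoring ι φ {a, b} = 0 ↔ φ a < φ b := by
  simp [sierpinskiColoring, h, h.not_gt]

theorem sierpinskiColoring_monochromatic {ι : X → α} {φ : X → β} (hφ : Function.Injective φ)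
    {Λ : Set X} {i : Fin 2}
    (hΛ : ∀ s : Finset X, ↑s ⊆ Λ → s.card = 2 → sierpinskiColoring ι φ s = i) :
    (∀ a ∈ Λ, ∀ b ∈ Λ, ι a < ι b → φ a < φ b) ∨ (∀ a ∈ Λ, ∀ b ∈ Λ, ι a < ι b → φ b < φ a) := by
  classical
  have hpair : ∀ a ∈ Λ, ∀ b ∈ Λ, ι a < ι b → sierpinskiColoring ι φ {a, b} = i :=
    fun a ha b hb h => hΛ _ (by simp [insert_subset_iff, ha, hb])
      (Finset.card_pair (ne_of_apply_ne ι h.ne))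
  by_cases hi : i = 0
  · exact .inl fun a ha b hb h => (sierpinskiColoring_pair_eq_zero_iff h).1 (hi ▸ hpair a ha b hb h)
  · refine .inr fun a ha b hb h => lt_of_le_of_ne (not_lt.1 fun hlt => hi ?_)
      (hφ.ne (ne_of_apply_ne ι h.ne)).symm
    rw [← hpair a ha b hb h]
    exact (sierpinskiColoring_pair_eq_zero_iff h).2 hlt

end SierpinskiColoring

theorem countable_space_bad_coloring_general
    (X : Type*) [MetricSpace X] [Countable X] :
    ∃ χ : Finset X → Fin 2,
      ¬ ∃ Λ : Set X, Λ.Infinite ∧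
        (∃ i : Fin 2, ∀ s : Finset X, ↑s ⊆ Λ → s.card = 2 → χ s = i) ∧
        ∃ r ∈ Λ, ∀ ε : ℝ, 0 < ε → ∃ y ∈ Λ, y ≠ r ∧ dist y r < ε := by
  have := totallySeparatedSpace_of_countable X
  obtain ⟨ι, hι⟩ := Countable.exists_injective_nat X
  obtain ⟨φ, hφc, hφi⟩ := exists_continuous_injective_real X
  refine ⟨sierpinskiColoring ι φ, ?_⟩
  rintro ⟨Λ, -, ⟨i, hΛ⟩, r, hr, hlim⟩
  have hacc : AccPt r (𝓟 Λ) := by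
    rw [accPt_iff_frequently, Metric.nhds_basis_ball.frequently_iff]
    intro ε hε
    obtain ⟨y, hy, hne, hdist⟩ := hlim ε hε
    exact ⟨y, hdist, hne, hy⟩
  rcases sierpinskiColoring_monochromatic hφi hΛ with hmono | hmono
  · exact not_accPt_of_increasing_along_enumeration hι hr hφc.continuousAt hmono hacc
  · exact not_accPt_of_increasing_along_enumeration (φ := OrderDual.toDual ∘ φ) hι hr
      (continuous_toDual.comp hφc).continuousAt hmono hacc

/-- every countable dense-in-itself metric space admits a 2-coloring
of its pairs with no infinite monochromatic set containing one of its limit points. -/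
theorem countable_space_bad_coloring
    (X : Type*) [MetricSpace X] [Countable X]
    (hdense : ∀ x : X, ∀ ε : ℝ, 0 < ε → ∃ y : X, y ≠ x ∧ dist y x < ε) :
    ∃ χ : Finset X → Fin 2,
      ¬ ∃ Λ : Set X, Λ.Infinite ∧
        (∃ i : Fin 2, ∀ s : Finset X, ↑s ⊆ Λ → s.card = 2 → χ s = i) ∧
        ∃ r ∈ Λ, ∀ ε : ℝ, 0 < ε → ∃ y ∈ Λ, y ≠ r ∧ dist y r < ε :=
  countable_space_bad_coloring_general X
end
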